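/- arXiv:2306.03188 — 9 statements merged into one kernel-verified Lean document; each statement's English description precedes it below -/
import Mathlib

section
/- Let A = A' ⊗ A'' be a tensor product of two graded artinian algebras over a field k, let ℓ' ∈ A'_1 and ℓ'' ∈ A''_1, and set ℓ = ℓ'⊗1 + 1⊗ℓ''. If the multiplication maps ×ℓ' : A'_{i-1} → A'_i and ×ℓ'' : A''_{j-1} → A''_j are both not surjective, then the multiplication map ×ℓ : A_{i+j-1} → A_{i+j} is not surjective. -/
open scoped TensorProduct

/-- Key auxiliary lemma: if `f` kills `ℓ * 𝒜 (i-1)` then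
`f ∘ proj i ∘ (ℓ * ·)` is identically zero. -/
lemma aux_proj_mul_zero {k A : Type*} [Field k] [CommRing A] [Algebra k A]
    (𝒜 : ℕ → Submodule k A) [GradedAlgebra 𝒜] (i : ℕ) (hi : 1 ≤ i)
    (ℓ : A) (hℓ : ℓ ∈ 𝒜 1) (f : Module.Dual k A)
    (hf : ∀ x ∈ 𝒜 (i - 1), f (ℓ * x) = 0) (a : A) :
    f (GradedAlgebra.proj 𝒜 i (ℓ * a)) = 0 := by
  induction a using DirectSum.Decomposition.inductionOn 𝒜 with
  | zero => simp
  | add m m' hm hm' =>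
      rw [mul_add, map_add, map_add, hm, hm', add_zero]
  | @homogeneous p m =>
      have hmem : ℓ * (m : A) ∈ 𝒜 (1 + p) := SetLike.mul_mem_graded hℓ m.2
      rcases eq_or_ne (1 + p) i with h | h
      · rw [GradedAlgebra.proj_apply, DirectSum.decompose_of_mem_same 𝒜 (h ▸ hmem)]
        have hp : p = i - 1 := by omega
        exact hf m (hp ▸ m.2)
      · rw [GradedAlgebra.proj_apply, DirectSum.decompose_of_mem_ne 𝒜 hmem h]
        simp

/-- Lemma 7.8 (memoir), surjectivity part: if `×ℓ' : A'_{i-1} → A'_i` and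
`×ℓ'' : A''_{j-1} → A''_j` are both not surjective, then
`×(ℓ'⊗1 + 1⊗ℓ'') : (A'⊗A'')_{i+j-1} → (A'⊗A'')_{i+j}` is not surjective. -/
theorem stmt_0 {k A' A'' : Type*} [Field k] [CommRing A'] [CommRing A'']
    [Algebra k A'] [Algebra k A'']
    (𝒜 : ℕ → Submodule k A') (ℬ : ℕ → Submodule k A'')
    [GradedAlgebra 𝒜] [GradedAlgebra ℬ]
    (hart' : IsArtinianRing A') (hart'' : IsArtinianRing A'')
    (i j : ℕ) (hi : 1 ≤ i) (hj : 1 ≤ j)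
    (ℓ' : A') (hℓ' : ℓ' ∈ 𝒜 1) (ℓ'' : A'') (hℓ'' : ℓ'' ∈ ℬ 1)
    (h1 : ¬ ∀ y ∈ 𝒜 i, ∃ x ∈ 𝒜 (i - 1), ℓ' * x = y)
    (h2 : ¬ ∀ y ∈ ℬ j, ∃ x ∈ ℬ (j - 1), ℓ'' * x = y) :
    ¬ ∀ y ∈ (⨆ (p : ℕ) (q : ℕ) (_ : p + q = i + j),
        Submodule.map₂ (TensorProduct.mk k A' A'') (𝒜 p) (ℬ q)),
      ∃ x ∈ (⨆ (p : ℕ) (q : ℕ) (_ : p + q = i + j - 1),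
        Submodule.map₂ (TensorProduct.mk k A' A'') (𝒜 p) (ℬ q)),
      (ℓ' ⊗ₜ[k] (1 : A'') + (1 : A') ⊗ₜ[k] ℓ'') * x = y := by
  push_neg at h1 h2
  obtain ⟨y₀, hy₀, hy₀'⟩ := h1
  obtain ⟨z₀, hz₀, hz₀'⟩ := h2
  -- y₀ is not in the image submodule T'
  set T' : Submodule k A' := (𝒜 (i - 1)).map (LinearMap.mul k A' ℓ') with hT'
  set T'' : Submodule k A'' := (ℬ (j - 1)).map (LinearMap.mul k A'' ℓ'') with hT''
  have hy₀T : y₀ ∉ T' := by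
    rintro ⟨x, hx, rfl⟩; exact hy₀' x hx rfl
  have hz₀T : z₀ ∉ T'' := by
    rintro ⟨x, hx, rfl⟩; exact hz₀' x hx rfl
  obtain ⟨f, hf0, hfT⟩ := T'.exists_dual_map_eq_bot_of_notMem hy₀T inferInstance
  obtain ⟨g, hg0, hgT⟩ := T''.exists_dual_map_eq_bot_of_notMem hz₀T inferInstance
  have hf : ∀ x ∈ 𝒜 (i - 1), f (ℓ' * x) = 0 := fun x hx => by
    have : f (ℓ' * x) ∈ T'.map f := ⟨ℓ' * x, ⟨x, hx, rfl⟩, rfl⟩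
    simpa [hfT] using this
  have hg : ∀ x ∈ ℬ (j - 1), g (ℓ'' * x) = 0 := fun x hx => by
    have : g (ℓ'' * x) ∈ T''.map g := ⟨ℓ'' * x, ⟨x, hx, rfl⟩, rfl⟩
    simpa [hgT] using this
  set f' : Module.Dual k A' := f ∘ₗ GradedAlgebra.proj 𝒜 i with hf'def
  set g' : Module.Dual k A'' := g ∘ₗ GradedAlgebra.proj ℬ j with hg'def
  set F : A' ⊗[k] A'' →ₗ[k] k :=
    (TensorProduct.lid k k).toLinearMap ∘ₗ TensorProduct.map f' g' with hFdef
  have hFtmul : ∀ (a : A') (b : A''), F (a ⊗ₜ[k] b) = f' a * g' b := fun a b => by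
    simp [hFdef, smul_eq_mul]
  -- F kills ℓ * x for every x
  have hFmul : ∀ x : A' ⊗[k] A'',
      F ((ℓ' ⊗ₜ[k] (1 : A'') + (1 : A') ⊗ₜ[k] ℓ'') * x) = 0 := by
    intro x
    induction x using TensorProduct.induction_on with
    | zero => simp
    | add u v hu hv => rw [mul_add, map_add, hu, hv, add_zero]
    | tmul a b =>
        rw [add_mul, map_add, Algebra.TensorProduct.tmul_mul_tmul,
          Algebra.TensorProduct.tmul_mul_tmul, one_mul, one_mul,
          hFtmul, hFtmul]
        have h1 : f' (ℓ' * a) = 0 := aux_proj_mul_zero 𝒜 i hi ℓ' hℓ' f hf a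
        have h2 : g' (ℓ'' * b) = 0 := aux_proj_mul_zero ℬ j hj ℓ'' hℓ'' g hg b
        rw [h1, h2, zero_mul, mul_zero, add_zero]
  intro h
  obtain ⟨x, -, hx⟩ := h (y₀ ⊗ₜ[k] z₀) (by
    refine Submodule.mem_iSup_of_mem i (Submodule.mem_iSup_of_mem j
      (Submodule.mem_iSup_of_mem rfl ?_))
    exact Submodule.apply_mem_map₂ _ hy₀ hz₀)
  have := hFmul x
  rw [hx, hFtmul] at this
  have hfy : f' y₀ = f y₀ := by
    rw [hf'def]
    simp [GradedAlgebra.proj_apply, DirectSum.decompose_of_mem_same 𝒜 hy₀]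
  have hgz : g' z₀ = g z₀ := by
    rw [hg'def]
    simp [GradedAlgebra.proj_apply, DirectSum.decompose_of_mem_same ℬ hz₀]
  rw [hfy, hgz] at this
  rcases mul_eq_zero.mp this with h | h
  · exact hf0 h
  · exact hg0 h
end

section
/- Let A = A' ⊗ A'' be a tensor product of two graded artinian algebras over a field k, let ℓ' ∈ A'_1 and ℓ'' ∈ A''_1, and set ℓ = ℓ'⊗1 + 1⊗ℓ''. If the multiplication maps ×ℓ' : A'_i → A'_{i+1} and ×ℓ'' : A''_j → A''_{j+1} are both not injective, then the multiplication map ×ℓ : A_{i+j} → A_{i+j+1} is not injective. -/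
open scoped TensorProduct

/-- Lemma 7.8 (memoir), injectivity part: if `×ℓ' : A'_i → A'_{i+1}` and
`×ℓ'' : A''_j → A''_{j+1}` are both not injective, then
`×(ℓ'⊗1 + 1⊗ℓ'') : (A'⊗A'')_{i+j} → (A'⊗A'')_{i+j+1}` is not injective. -/
theorem stmt_1 {k A' A'' : Type*} [Field k] [CommRing A'] [CommRing A'']
    [Algebra k A'] [Algebra k A'']
    (𝒜 : ℕ → Submodule k A') (ℬ : ℕ → Submodule k A'')
    [GradedAlgebra 𝒜] [GradedAlgebra ℬ]
    (hart' : IsArtinianRing A') (hart'' : IsArtinianRing A'')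
    (i j : ℕ)
    (ℓ' : A') (hℓ' : ℓ' ∈ 𝒜 1) (ℓ'' : A'') (hℓ'' : ℓ'' ∈ ℬ 1)
    (h1 : ¬ ∀ x ∈ 𝒜 i, ℓ' * x = 0 → x = 0)
    (h2 : ¬ ∀ x ∈ ℬ j, ℓ'' * x = 0 → x = 0) :
    ¬ ∀ x ∈ (⨆ (p : ℕ) (q : ℕ) (_ : p + q = i + j),
        Submodule.map₂ (TensorProduct.mk k A' A'') (𝒜 p) (ℬ q)),
      (ℓ' ⊗ₜ[k] (1 : A'') + (1 : A') ⊗ₜ[k] ℓ'') * x = 0 → x = 0 := by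
  push_neg at h1 h2 ⊢
  obtain ⟨x', hx'm, hx'0, hx'⟩ := h1
  obtain ⟨x'', hx''m, hx''0, hx''⟩ := h2
  refine ⟨x' ⊗ₜ[k] x'', ?_, ?_, ?_⟩
  · refine Submodule.mem_iSup_of_mem i (Submodule.mem_iSup_of_mem j
      (Submodule.mem_iSup_of_mem rfl ?_))
    exact Submodule.apply_mem_map₂ _ hx'm hx''m
  · rw [add_mul, Algebra.TensorProduct.tmul_mul_tmul,
      Algebra.TensorProduct.tmul_mul_tmul, one_mul, one_mul, hx'0, hx''0,
      TensorProduct.zero_tmul, TensorProduct.tmul_zero, add_zero]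
  · intro h
    obtain ⟨f, hf⟩ : ∃ f : Module.Dual k A', f x' ≠ 0 := by
      by_contra hc; push_neg at hc
      exact hx' ((Module.forall_dual_apply_eq_zero_iff k x').mp hc)
    obtain ⟨g, hg⟩ : ∃ g : Module.Dual k A'', g x'' ≠ 0 := by
      by_contra hc; push_neg at hc
      exact hx'' ((Module.forall_dual_apply_eq_zero_iff k x'').mp hc)
    have := congrArg ((TensorProduct.lid k k).toLinearMap.comp
      (TensorProduct.map f g)) h
    simp at this
    exact hf (this.resolve_right hg)
end

section
/- Let S = k[x₁,...,x₄], char k = 0, d ≥ 2, and I = (x₁^d, x₂^d, x₃^d, x₄^d, x₁^{d-1}x₂, x₃^{d-1}x₄). Then the element F = (X₁ - X₂)^{d-1}(X₃ - X₄)^{d-1} of degree 2d-2 is annihilated by the differentiation action of ℓ = x₁+x₂+x₃+x₄ and by the differentiation action of every generator of I. -/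
open MvPolynomial

section aux

variable {k : Type*} [CommRing k]

private lemma pd_sub_self {i j : Fin 4} (h : i ≠ j) :
    pderiv i ((X i - X j : MvPolynomial (Fin 4) k)) = 1 := by
  rw [map_sub, pderiv_X_self, pderiv_X_of_ne h.symm, sub_zero]

private lemma pd_sub_other {i j : Fin 4} (h : i ≠ j) :
    pderiv j ((X i - X j : MvPolynomial (Fin 4) k)) = -1 := by
  rw [map_sub, pderiv_X_self, pderiv_X_of_ne h, zero_sub]

private lemma pd_pow_self {i j : Fin 4} (h : i ≠ j) (n : ℕ) :
    pderiv i (((X i - X j) ^ n : MvPolynomial (Fin 4) k)) = n • (X i - X j) ^ (n - 1) := by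
  rw [Derivation.leibniz_pow, pd_sub_self h, smul_eq_mul, mul_one]

private lemma pd_pow_other {i j : Fin 4} (h : i ≠ j) (n : ℕ) :
    pderiv j (((X i - X j) ^ n : MvPolynomial (Fin 4) k)) = -(n • (X i - X j) ^ (n - 1)) := by
  rw [Derivation.leibniz_pow, pd_sub_other h, smul_eq_mul, mul_neg_one, smul_neg]

private lemma pd_pow_ne {i j l : Fin 4} (hi : l ≠ i) (hj : l ≠ j) (n : ℕ) :
    pderiv l (((X i - X j) ^ n : MvPolynomial (Fin 4) k)) = 0 := by
  rw [Derivation.leibniz_pow, map_sub, pderiv_X_of_ne hi.symm, pderiv_X_of_ne hj.symm,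
    sub_zero, smul_zero, smul_zero]

private lemma iter_smul (i : Fin 4) (n : ℕ) :
    ∀ (m : ℕ) (p : MvPolynomial (Fin 4) k),
      (⇑(pderiv i))^[m] (n • p) = n • (⇑(pderiv i))^[m] p := by
  intro m
  induction m with
  | zero => intro p; simp
  | succ m ih =>
    intro p
    rw [Function.iterate_succ_apply, Function.iterate_succ_apply, map_nsmul, ih]

private lemma iter_pow_zero {i j : Fin 4} (h : i ≠ j) :
    ∀ m n : ℕ, n < m →
      (⇑(pderiv i))^[m] (((X i - X j) ^ n : MvPolynomial (Fin 4) k)) = 0 := by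
  intro m
  induction m with
  | zero => omega
  | succ m ih =>
    intro n hn
    rw [Function.iterate_succ_apply, pd_pow_self h]
    rcases Nat.eq_zero_or_pos n with h0 | h0
    · subst h0; simp
    · rw [iter_smul, ih (n - 1) (by omega), smul_zero]

private lemma iter_neg {i : Fin 4} :
    ∀ (m : ℕ) (p : MvPolynomial (Fin 4) k),
      (⇑(pderiv i))^[m] (-p) = -((⇑(pderiv i))^[m] p) := by
  intro m
  induction m with
  | zero => intro p; simp
  | succ m ih =>
    intro p
    rw [Function.iterate_succ_apply, Function.iterate_succ_apply, map_neg, ih]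

private lemma iter_pow_zero' {i j : Fin 4} (h : i ≠ j) :
    ∀ m n : ℕ, n < m →
      (⇑(pderiv j))^[m] (((X i - X j) ^ n : MvPolynomial (Fin 4) k)) = 0 := by
  intro m
  induction m with
  | zero => omega
  | succ m ih =>
    intro n hn
    rw [Function.iterate_succ_apply, pd_pow_other h]
    rcases Nat.eq_zero_or_pos n with h0 | h0
    · subst h0; simp
    · rw [iter_neg, iter_smul, ih (n - 1) (by omega), smul_zero, neg_zero]


private lemma iter_mul {i : Fin 4} {q : MvPolynomial (Fin 4) k} (hq : pderiv i q = 0) :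
    ∀ (m : ℕ) (p : MvPolynomial (Fin 4) k),
      (⇑(pderiv i))^[m] (p * q) = ((⇑(pderiv i))^[m] p) * q := by
  intro m
  induction m with
  | zero => intro p; simp
  | succ m ih =>
    intro p
    rw [Function.iterate_succ_apply, Function.iterate_succ_apply, pderiv_mul, hq,
      mul_zero, add_zero, ih]

end aux

/-- In `k[X₁,...,X₄]` (char 0), the polynomial `F = (X₁-X₂)^{d-1}(X₃-X₄)^{d-1}` of degree
`2d-2` is annihilated by the differentiation action of `ℓ = x₁+x₂+x₃+x₄` and by the
differentiation action of every generator of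
`I = (x₁^d, x₂^d, x₃^d, x₄^d, x₁^{d-1}x₂, x₃^{d-1}x₄)`. -/
theorem stmt_4 {k : Type*} [Field k] [CharZero k] (d : ℕ) (hd : 2 ≤ d) :
    ((X 0 - X 1) ^ (d - 1) * (X 2 - X 3) ^ (d - 1) :
        MvPolynomial (Fin 4) k).totalDegree = 2 * d - 2 ∧
    (∑ i : Fin 4, pderiv i
        ((X 0 - X 1) ^ (d - 1) * (X 2 - X 3) ^ (d - 1) : MvPolynomial (Fin 4) k)) = 0 ∧
    (∀ i : Fin 4, (⇑(pderiv i))^[d]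
        ((X 0 - X 1) ^ (d - 1) * (X 2 - X 3) ^ (d - 1) : MvPolynomial (Fin 4) k) = 0) ∧
    (⇑(pderiv (0 : Fin 4)))^[d - 1] (pderiv (1 : Fin 4)
        ((X 0 - X 1) ^ (d - 1) * (X 2 - X 3) ^ (d - 1) : MvPolynomial (Fin 4) k)) = 0 ∧
    (⇑(pderiv (2 : Fin 4)))^[d - 1] (pderiv (3 : Fin 4)
        ((X 0 - X 1) ^ (d - 1) * (X 2 - X 3) ^ (d - 1) : MvPolynomial (Fin 4) k)) = 0 := by
  have h01 : (0 : Fin 4) ≠ 1 := by decide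
  have h23 : (2 : Fin 4) ≠ 3 := by decide
  have e0B : pderiv (0 : Fin 4) ((X 2 - X 3 : MvPolynomial (Fin 4) k) ^ (d - 1)) = 0 :=
    pd_pow_ne (by decide) (by decide) _
  have e1B : pderiv (1 : Fin 4) ((X 2 - X 3 : MvPolynomial (Fin 4) k) ^ (d - 1)) = 0 :=
    pd_pow_ne (by decide) (by decide) _
  have e2A : pderiv (2 : Fin 4) ((X 0 - X 1 : MvPolynomial (Fin 4) k) ^ (d - 1)) = 0 :=
    pd_pow_ne (by decide) (by decide) _
  have e3A : pderiv (3 : Fin 4) ((X 0 - X 1 : MvPolynomial (Fin 4) k) ^ (d - 1)) = 0 :=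
    pd_pow_ne (by decide) (by decide) _
  have hX01 : (X 0 - X 1 : MvPolynomial (Fin 4) k) ≠ 0 :=
    sub_ne_zero.mpr (fun h => h01 (X_injective h))
  have hX23 : (X 2 - X 3 : MvPolynomial (Fin 4) k) ≠ 0 :=
    sub_ne_zero.mpr (fun h => h23 (X_injective h))
  have hne : ((X 0 - X 1) ^ (d - 1) * (X 2 - X 3) ^ (d - 1) :
      MvPolynomial (Fin 4) k) ≠ 0 :=
    mul_ne_zero (pow_ne_zero _ hX01) (pow_ne_zero _ hX23)
  have hA : ((X 0 - X 1 : MvPolynomial (Fin 4) k)).IsHomogeneous 1 :=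
    (isHomogeneous_X _ _).sub (isHomogeneous_X _ _)
  have hB : ((X 2 - X 3 : MvPolynomial (Fin 4) k)).IsHomogeneous 1 :=
    (isHomogeneous_X _ _).sub (isHomogeneous_X _ _)
  refine ⟨?_, ?_, ?_, ?_, ?_⟩
  · rw [((hA.pow (d - 1)).mul (hB.pow (d - 1))).totalDegree hne]
    omega
  · rw [Fin.sum_univ_four, pderiv_mul, pderiv_mul, pderiv_mul, pderiv_mul,
      pd_pow_self h01, pd_pow_other h01, pd_pow_self h23, pd_pow_other h23,
      e0B, e1B, e2A, e3A]
    ring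
  · intro i
    fin_cases i
    · show (⇑(pderiv (0 : Fin 4)))^[d] _ = 0
      rw [iter_mul e0B, iter_pow_zero h01 d (d - 1) (by omega), zero_mul]
    · show (⇑(pderiv (1 : Fin 4)))^[d] _ = 0
      rw [iter_mul e1B, iter_pow_zero' h01 d (d - 1) (by omega), zero_mul]
    · show (⇑(pderiv (2 : Fin 4)))^[d] _ = 0
      rw [mul_comm, iter_mul e2A, iter_pow_zero h23 d (d - 1) (by omega), zero_mul]
    · show (⇑(pderiv (3 : Fin 4)))^[d] _ = 0
      rw [mul_comm, iter_mul e3A, iter_pow_zero' h23 d (d - 1) (by omega), zero_mul]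
  · rw [pderiv_mul, e1B, mul_zero, add_zero, pd_pow_other h01, neg_mul, smul_mul_assoc,
      iter_neg, iter_smul, iter_mul e0B, iter_pow_zero h01 (d - 1) (d - 1 - 1) (by omega),
      zero_mul, smul_zero, neg_zero]
  · rw [pderiv_mul, e3A, zero_mul, zero_add, pd_pow_other h23, mul_neg, iter_neg,
      mul_comm, iter_mul e2A, iter_smul, iter_pow_zero h23 (d - 1) (d - 1 - 1) (by omega),
      smul_zero, zero_mul, neg_zero]
end

section
/- Let k have characteristic zero, S = k[x₁,...,x₄], d ≥ 2, I = (x₁^d, x₂^d, x₃^d, x₄^d, x₁^{d-1}x₂, x₃^{d-1}x₄), h₁ = ∑_{i=0}^{d-2} (-1)^{d-2-i}(i+1) x₁^i x₂^{d-2-i}, and h₂ = ∑_{i=0}^{d-2} (-1)^{d-2-i}(i+1) x₃^i x₄^{d-2-i}. Then (x₁+x₂+x₃+x₄)·(x₁+x₂-x₃-x₄)·h₁·h₂ ∈ I, while (x₁+x₂-x₃-x₄)·h₁·h₂ ∉ I. -/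
open MvPolynomial Finset

noncomputable def Hh {k : Type*} [CommRing k] (a b : Fin 4) (e : ℕ) : MvPolynomial (Fin 4) k :=
  ∑ i ∈ Finset.range (e + 1), C ((-1 : k) ^ (e - i) * ((i : k) + 1)) * X a ^ i * X b ^ (e - i)

lemma Hh_succ {k : Type*} [CommRing k] (a b : Fin 4) (e : ℕ) :
    (Hh a b (e+1) : MvPolynomial (Fin 4) k)
      = C ((e : k) + 2) * X a ^ (e+1) - X b * Hh a b e := by
  unfold Hh
  rw [Finset.sum_range_succ]
  have h1 : ∀ i ∈ Finset.range (e+1),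
      C ((-1 : k) ^ (e + 1 - i) * ((i : k) + 1)) * X a ^ i * X b ^ (e + 1 - i)
        = -(X b * (C ((-1 : k) ^ (e - i) * ((i : k) + 1)) * X a ^ i * X b ^ (e - i))) := by
    intro i hi
    rw [Finset.mem_range] at hi
    have h2 : e + 1 - i = (e - i) + 1 := by omega
    rw [h2]
    simp only [map_mul, map_pow, map_neg, map_one, map_add, map_natCast]
    ring
  rw [Finset.sum_congr rfl h1, Finset.sum_neg_distrib, ← Finset.mul_sum]
  simp only [map_mul, map_pow, map_neg, map_one, map_add, map_natCast, map_ofNat]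
  simp only [Nat.sub_self, pow_zero, Nat.cast_add, Nat.cast_one]
  ring

lemma key {k : Type*} [CommRing k] (a b : Fin 4) (e : ℕ) :
    ((X a + X b) ^ 2 * Hh a b e : MvPolynomial (Fin 4) k)
      = C ((e : k) + 1) * X a ^ (e+2) + C ((e : k) + 2) * X a ^ (e+1) * X b
        + C ((-1 : k) ^ e) * X b ^ (e+2) := by
  induction e with
  | zero =>
      unfold Hh
      norm_num
      simp only [map_mul, map_pow, map_neg, map_one, map_add, map_natCast, map_ofNat,
        Nat.cast_zero]
      ring
  | succ e ih =>
      rw [Hh_succ, mul_sub]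
      rw [show (X a + X b) ^ 2 * (X b * Hh a b e) = X b * ((X a + X b) ^ 2 * Hh a b e) by ring, ih]
      simp only [map_mul, map_pow, map_neg, map_one, map_add, map_natCast, map_ofNat,
        Nat.cast_add, Nat.cast_one]
      ring

/-- With `h₁ = ∑ (-1)^{d-2-i}(i+1) x₁^i x₂^{d-2-i}`, `h₂ = ∑ (-1)^{d-2-i}(i+1) x₃^i x₄^{d-2-i}`
and `I = (x₁^d,...,x₄^d, x₁^{d-1}x₂, x₃^{d-1}x₄)`:
`(x₁+x₂+x₃+x₄)(x₁+x₂-x₃-x₄)h₁h₂ ∈ I` while `(x₁+x₂-x₃-x₄)h₁h₂ ∉ I`. -/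
theorem stmt_5 {k : Type*} [Field k] [CharZero k] (d : ℕ) (hd : 2 ≤ d) :
    (X 0 + X 1 + X 2 + X 3) * ((X 0 + X 1 - X 2 - X 3) *
        ((∑ i ∈ Finset.range (d - 1),
            C ((-1 : k) ^ (d - 2 - i) * ((i : k) + 1)) * X 0 ^ i * X 1 ^ (d - 2 - i)) *
         (∑ i ∈ Finset.range (d - 1),
            C ((-1 : k) ^ (d - 2 - i) * ((i : k) + 1)) * X 2 ^ i * X 3 ^ (d - 2 - i)))) ∈
      Ideal.span ({X 0 ^ d, X 1 ^ d, X 2 ^ d, X 3 ^ d, X 0 ^ (d - 1) * X 1,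
        X 2 ^ (d - 1) * X 3} : Set (MvPolynomial (Fin 4) k)) ∧
    (X 0 + X 1 - X 2 - X 3) *
        ((∑ i ∈ Finset.range (d - 1),
            C ((-1 : k) ^ (d - 2 - i) * ((i : k) + 1)) * X 0 ^ i * X 1 ^ (d - 2 - i)) *
         (∑ i ∈ Finset.range (d - 1),
            C ((-1 : k) ^ (d - 2 - i) * ((i : k) + 1)) * X 2 ^ i * X 3 ^ (d - 2 - i))) ∉
      Ideal.span ({X 0 ^ d, X 1 ^ d, X 2 ^ d, X 3 ^ d, X 0 ^ (d - 1) * X 1,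
        X 2 ^ (d - 1) * X 3} : Set (MvPolynomial (Fin 4) k)) := by
  obtain ⟨e, rfl⟩ : ∃ e, d = e + 2 := ⟨d - 2, by omega⟩
  have hH1 : (∑ i ∈ Finset.range (e + 2 - 1),
      C ((-1 : k) ^ (e + 2 - 2 - i) * ((i : k) + 1)) * X 0 ^ i * X 1 ^ (e + 2 - 2 - i))
      = Hh 0 1 e := rfl
  have hH2 : (∑ i ∈ Finset.range (e + 2 - 1),
      C ((-1 : k) ^ (e + 2 - 2 - i) * ((i : k) + 1)) * X 2 ^ i * X 3 ^ (e + 2 - 2 - i))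
      = Hh 2 3 e := rfl
  rw [hH1, hH2]
  simp only [show e + 2 - 1 = e + 1 from rfl]
  set I : Ideal (MvPolynomial (Fin 4) k) := Ideal.span
      ({X 0 ^ (e+2), X 1 ^ (e+2), X 2 ^ (e+2), X 3 ^ (e+2), X 0 ^ (e+1) * X 1,
        X 2 ^ (e+1) * X 3} : Set (MvPolynomial (Fin 4) k)) with hI
  constructor
  · have m1 : (X 0 : MvPolynomial (Fin 4) k) ^ (e+2) ∈ I := Ideal.subset_span (Set.mem_insert _ _)
    have m2 : (X 1 : MvPolynomial (Fin 4) k) ^ (e+2) ∈ I := Ideal.subset_span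
      (Set.mem_insert_of_mem _ (Set.mem_insert _ _))
    have m3 : (X 2 : MvPolynomial (Fin 4) k) ^ (e+2) ∈ I := Ideal.subset_span
      (Set.mem_insert_of_mem _ (Set.mem_insert_of_mem _ (Set.mem_insert _ _)))
    have m4 : (X 3 : MvPolynomial (Fin 4) k) ^ (e+2) ∈ I := Ideal.subset_span
      (Set.mem_insert_of_mem _ (Set.mem_insert_of_mem _ (Set.mem_insert_of_mem _
        (Set.mem_insert _ _))))
    have m5 : (X 0 : MvPolynomial (Fin 4) k) ^ (e+1) * X 1 ∈ I := Ideal.subset_span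
      (Set.mem_insert_of_mem _ (Set.mem_insert_of_mem _ (Set.mem_insert_of_mem _
        (Set.mem_insert_of_mem _ (Set.mem_insert _ _)))))
    have m6 : (X 2 : MvPolynomial (Fin 4) k) ^ (e+1) * X 3 ∈ I := Ideal.subset_span
      (Set.mem_insert_of_mem _ (Set.mem_insert_of_mem _ (Set.mem_insert_of_mem _
        (Set.mem_insert_of_mem _ (Set.mem_insert_of_mem _ rfl)))))
    have hf : (X 0 + X 1 + X 2 + X 3) * ((X 0 + X 1 - X 2 - X 3) *
          ((Hh 0 1 e : MvPolynomial (Fin 4) k) * Hh 2 3 e))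
        = (C ((e : k) + 1) * X 0 ^ (e+2) + C ((e : k) + 2) * (X 0 ^ (e+1) * X 1)
            + C ((-1 : k) ^ e) * X 1 ^ (e+2)) * Hh 2 3 e
          - (C ((e : k) + 1) * X 2 ^ (e+2) + C ((e : k) + 2) * (X 2 ^ (e+1) * X 3)
            + C ((-1 : k) ^ e) * X 3 ^ (e+2)) * Hh 0 1 e := by
      have k1 := key (k := k) 0 1 e
      have k2 := key (k := k) 2 3 e
      linear_combination (Hh 2 3 e : MvPolynomial (Fin 4) k) * k1 - (Hh 0 1 e) * k2
    rw [hf]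
    refine Ideal.sub_mem _ (Ideal.mul_mem_right _ _ ?_) (Ideal.mul_mem_right _ _ ?_)
    · exact Ideal.add_mem _ (Ideal.add_mem _ (Ideal.mul_mem_left _ _ m1)
        (Ideal.mul_mem_left _ _ m5)) (Ideal.mul_mem_left _ _ m2)
    · exact Ideal.add_mem _ (Ideal.add_mem _ (Ideal.mul_mem_left _ _ m3)
        (Ideal.mul_mem_left _ _ m6)) (Ideal.mul_mem_left _ _ m4)
  · intro hmem
    set v : Fin 4 → MvPolynomial (Fin 4) k := ![X 0, 0, X 2, 0] with hv
    have hv0 : v 0 = X 0 := rfl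
    have hv1 : v 1 = 0 := rfl
    have hv2 : v 2 = X 2 := rfl
    have hv3 : v 3 = 0 := rfl
    set φ : MvPolynomial (Fin 4) k →ₐ[k] MvPolynomial (Fin 4) k := aeval v with hφ
    have haux : ∀ (a b : Fin 4), v b = 0 → φ (Hh a b e) = C ((e : k) + 1) * (v a) ^ e := by
      intro a b hb
      unfold Hh
      rw [map_sum]
      rw [Finset.sum_eq_single_of_mem e (Finset.self_mem_range_succ e)]
      · simp [hb, hφ]
      · intro i hi hne
        rw [Finset.mem_range] at hi
        have : e - i ≠ 0 := by omega
        simp [hb, hφ, zero_pow this]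
    have hH01 : φ (Hh 0 1 e) = C ((e : k) + 1) * X 0 ^ e := haux 0 1 hv1
    have hH23 : φ (Hh 2 3 e) = C ((e : k) + 1) * X 2 ^ e := haux 2 3 hv3
    set c : k := ((e : k) + 1) * ((e : k) + 1) with hc
    set m1 : Fin 4 →₀ ℕ := Finsupp.single 0 (e+1) + Finsupp.single 2 e with hm1
    set m2 : Fin 4 →₀ ℕ := Finsupp.single 0 e + Finsupp.single 2 (e+1) with hm2
    have hmon : ∀ (p q : ℕ),
        (monomial (Finsupp.single 0 p + Finsupp.single 2 q) c : MvPolynomial (Fin 4) k)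
          = (C ((e : k) + 1) * X 0 ^ p) * (C ((e : k) + 1) * X 2 ^ q) := by
      intro p q
      rw [C_mul_X_pow_eq_monomial, C_mul_X_pow_eq_monomial, monomial_mul]
    have hφf : φ ((X 0 + X 1 - X 2 - X 3) * ((Hh 0 1 e : MvPolynomial (Fin 4) k) * Hh 2 3 e))
        = monomial m1 c - monomial m2 c := by
      rw [map_mul, map_mul, hH01, hH23, map_sub, map_sub, map_add]
      simp only [hφ, aeval_X, hv0, hv1, hv2, hv3]
      rw [hm1, hm2, hmon, hmon]
      ring
    have h2 : φ ((X 0 + X 1 - X 2 - X 3) * ((Hh 0 1 e : MvPolynomial (Fin 4) k) * Hh 2 3 e))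
        ∈ Ideal.span ((fun s => monomial s (1 : k)) ''
            ({Finsupp.single 0 (e+2), Finsupp.single 2 (e+2)} : Set (Fin 4 →₀ ℕ))) := by
      have h3 : φ ((X 0 + X 1 - X 2 - X 3) * ((Hh 0 1 e : MvPolynomial (Fin 4) k) * Hh 2 3 e))
          ∈ Ideal.map φ.toRingHom I := Ideal.mem_map_of_mem _ hmem
      rw [hI, Ideal.map_span] at h3
      refine Ideal.span_le.mpr ?_ h3
      rintro _ ⟨g, hg, rfl⟩
      simp only [Set.mem_insert_iff, Set.mem_singleton_iff] at hg
      have he2 : e + 2 ≠ 0 := by omega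
      rcases hg with rfl | rfl | rfl | rfl | rfl | rfl
      · refine Ideal.subset_span ⟨Finsupp.single 0 (e+2), Set.mem_insert _ _, ?_⟩
        simp only [AlgHom.toRingHom_eq_coe, RingHom.coe_coe, map_pow, hφ, aeval_X, hv0]
        rw [X_pow_eq_monomial]
      · simp only [AlgHom.toRingHom_eq_coe, RingHom.coe_coe, map_pow, hφ, aeval_X, hv1,
          zero_pow he2]
        exact Ideal.zero_mem _
      · refine Ideal.subset_span ⟨Finsupp.single 2 (e+2),
          Set.mem_insert_of_mem _ rfl, ?_⟩
        simp only [AlgHom.toRingHom_eq_coe, RingHom.coe_coe, map_pow, hφ, aeval_X, hv2]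
        rw [X_pow_eq_monomial]
      · simp only [AlgHom.toRingHom_eq_coe, RingHom.coe_coe, map_pow, hφ, aeval_X, hv3,
          zero_pow he2]
        exact Ideal.zero_mem _
      · simp only [AlgHom.toRingHom_eq_coe, RingHom.coe_coe, map_mul, map_pow, hφ, aeval_X,
          hv0, hv1, mul_zero]
        exact Ideal.zero_mem _
      · simp only [AlgHom.toRingHom_eq_coe, RingHom.coe_coe, map_mul, map_pow, hφ, aeval_X,
          hv2, hv3, mul_zero]
        exact Ideal.zero_mem _
    rw [hφf] at h2
    have hc0 : c ≠ 0 := by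
      rw [hc]
      have : ((e : k) + 1) ≠ 0 := by
        exact_mod_cast Nat.cast_ne_zero (R := k).mpr (Nat.succ_ne_zero e)
      exact mul_ne_zero this this
    have hm12 : m2 ≠ m1 := by
      intro h
      have := DFunLike.congr_fun h (0 : Fin 4)
      simp [hm1, hm2, Finsupp.single_apply] at this
    have hsupp : m1 ∈ (monomial m1 c - monomial m2 c : MvPolynomial (Fin 4) k).support := by
      rw [mem_support_iff, coeff_sub, coeff_monomial, coeff_monomial, if_pos rfl,
        if_neg hm12]
      simpa using hc0
    obtain ⟨s, hs, hle⟩ := mem_ideal_span_monomial_image.mp h2 m1 hsupp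
    rcases hs with rfl | rfl
    · have := hle 0
      simp [hm1, Finsupp.single_apply] at this
    · have := hle 2
      simp [hm1, Finsupp.single_apply] at this
end

section
/- Let k have characteristic zero, n ≥ 3, d ≥ 2, and I = (x₁^d, ..., x_n^d, x₁x_n^{d-1}, ..., x_{n-1}x_n^{d-1}) ⊂ k[x₁,...,x_n]. Then (x₁+⋯+x_n)·x_n^{d-1} ∈ I, and x_n^{d-1} ∉ I; hence the multiplication by x₁+⋯+x_n map from degree d-1 to degree d of S/I has nontrivial kernel. -/
open MvPolynomial

/-- For `I = (x₁^d,...,x_n^d, x₁x_n^{d-1},...,x_{n-1}x_n^{d-1})` one has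
`(x₁+⋯+x_n)·x_n^{d-1} ∈ I` and `x_n^{d-1} ∉ I`. -/
theorem stmt_11 {k : Type*} [Field k] [CharZero k] (n d : ℕ) (hn : 3 ≤ n) (hd : 2 ≤ d) :
    (∑ i : Fin n, X i) * X (⟨n - 1, by omega⟩ : Fin n) ^ (d - 1) ∈
      Ideal.span ({p | ∃ i : Fin n, p = X i ^ d} ∪
        {p | ∃ i : Fin n, i ≠ ⟨n - 1, by omega⟩ ∧
          p = X i * X (⟨n - 1, by omega⟩ : Fin n) ^ (d - 1)} :
        Set (MvPolynomial (Fin n) k)) ∧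
    (X (⟨n - 1, by omega⟩ : Fin n) ^ (d - 1) : MvPolynomial (Fin n) k) ∉
      Ideal.span ({p | ∃ i : Fin n, p = X i ^ d} ∪
        {p | ∃ i : Fin n, i ≠ ⟨n - 1, by omega⟩ ∧
          p = X i * X (⟨n - 1, by omega⟩ : Fin n) ^ (d - 1)} :
        Set (MvPolynomial (Fin n) k)) := by
  have hm : (n : ℕ) - 1 < n := by omega
  set m : Fin n := ⟨n - 1, hm⟩ with hmdef
  set s : Set (MvPolynomial (Fin n) k) :=
    ({p | ∃ i : Fin n, p = X i ^ d} ∪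
      {p | ∃ i : Fin n, i ≠ m ∧ p = X i * X m ^ (d - 1)}) with hs
  constructor
  · rw [Finset.sum_mul]
    apply Ideal.sum_mem
    intro i _
    by_cases h : i = m
    · subst h
      have heq : (X m : MvPolynomial (Fin n) k) * X m ^ (d - 1) = X m ^ d := by
        rw [← pow_succ']
        congr 1
        omega
      rw [heq]
      exact Ideal.subset_span (Or.inl ⟨m, rfl⟩)
    · exact Ideal.subset_span (Or.inr ⟨i, h, rfl⟩)
  · intro hmem
    -- map to Polynomial k sending X m to X, others to 0
    set φ : MvPolynomial (Fin n) k →+* Polynomial k :=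
      (aeval (fun i : Fin n => if i = m then Polynomial.X else 0)).toRingHom with hφ
    have hmap : φ (X m ^ (d - 1)) ∈ Ideal.map φ (Ideal.span s) :=
      Ideal.mem_map_of_mem φ hmem
    rw [Ideal.map_span] at hmap
    have hle : Ideal.span (φ '' s) ≤ Ideal.span {(Polynomial.X : Polynomial k) ^ d} := by
      rw [Ideal.span_le]
      rintro p ⟨q, hq, rfl⟩
      rcases hq with ⟨i, rfl⟩ | ⟨i, hi, rfl⟩
      · simp only [hφ, map_pow, AlgHom.toRingHom_eq_coe, RingHom.coe_coe, aeval_X]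
        by_cases h : i = m
        · rw [if_pos h]
          exact Ideal.subset_span rfl
        · rw [if_neg h, zero_pow (by omega)]
          exact Ideal.zero_mem _
      · simp only [hφ, map_mul, map_pow, AlgHom.toRingHom_eq_coe, RingHom.coe_coe, aeval_X,
          if_neg hi, zero_mul]
        exact Ideal.zero_mem _
    have hX : φ (X m ^ (d - 1)) = Polynomial.X ^ (d - 1) := by
      simp [hφ]
    rw [hX] at hmap
    have hdvd : (Polynomial.X : Polynomial k) ^ d ∣ Polynomial.X ^ (d - 1) :=
      Ideal.mem_span_singleton.mp (hle hmap)
    have hdeg := Polynomial.natDegree_le_of_dvd hdvd (by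
      exact pow_ne_zero _ Polynomial.X_ne_zero)
    rw [Polynomial.natDegree_X_pow, Polynomial.natDegree_X_pow] at hdeg
    omega
end

section
/- Let k have characteristic zero, n ≥ 5, d ≥ 4, S = k[x₁,...,x₅], and I = (x₁^d,...,x₅^d, x₁^{d-1}x₂, ..., x₁^{d-1}x₄). Then the polynomial (X₁-X₂)(X₁-X₃)(X₂-X₃)^{d-2}(X₄-X₅)^{d-1} of degree 2d-1 is annihilated by the differentiation action of every generator of I and by ∂/∂X₁+⋯+∂/∂X₅. -/
open MvPolynomial

private lemma aux_support {σ R : Type*} [CommSemiring R] (i : σ)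
    (p : MvPolynomial σ R) {m : σ →₀ ℕ} (hm : m ∈ (pderiv i p).support) :
    ∃ s ∈ p.support, s i ≠ 0 ∧ m = s - Finsupp.single i 1 := by
  classical
  rw [← support_sum_monomial_coeff p, map_sum] at hm
  obtain ⟨s, hs, hms⟩ := Finset.mem_biUnion.mp (support_sum hm)
  rw [pderiv_monomial, support_monomial] at hms
  by_cases h0 : s i = 0
  · simp [h0] at hms
  · refine ⟨s, hs, h0, ?_⟩
    split_ifs at hms with h
    · simp at hms
    · simpa using hms

private lemma degreeOf_pderiv_le' {σ R : Type*} [CommSemiring R] (n i : σ)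
    (p : MvPolynomial σ R) : degreeOf n (pderiv i p) ≤ degreeOf n p := by
  rw [degreeOf_le_iff]
  intro m hm
  obtain ⟨s, hs, -, rfl⟩ := aux_support i p hm
  refine le_trans ?_ (monomial_le_degreeOf n hs)
  rw [Finsupp.tsub_apply]
  exact Nat.sub_le _ _

private lemma degreeOf_pderiv_self {σ R : Type*} [CommSemiring R] (i : σ)
    (p : MvPolynomial σ R) : degreeOf i (pderiv i p) ≤ degreeOf i p - 1 := by
  rw [degreeOf_le_iff]
  intro m hm
  obtain ⟨s, hs, -, rfl⟩ := aux_support i p hm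
  rw [Finsupp.tsub_apply, Finsupp.single_eq_same]
  exact Nat.sub_le_sub_right (monomial_le_degreeOf i hs) 1

private lemma pderiv_iterate_zero {σ R : Type*} [CommSemiring R] (i : σ)
    (p : MvPolynomial σ R) (n : ℕ) (h : degreeOf i p < n) :
    (⇑(pderiv i))^[n] p = 0 := by
  induction n generalizing p with
  | zero => omega
  | succ n ih =>
    rw [Function.iterate_succ_apply]
    rcases Nat.eq_zero_or_pos (degreeOf i p) with h0 | h0
    · have hz : pderiv i p = 0 := by
        rw [← support_eq_empty]
        refine Finset.eq_empty_iff_forall_notMem.mpr fun m hm => ?_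
        obtain ⟨s, hs, hsi, -⟩ := aux_support i p hm
        exact hsi (Nat.le_zero.mp (h0 ▸ monomial_le_degreeOf i hs))
      rw [hz]
      exact Function.iterate_fixed (map_zero _) n
    · exact ih _ (lt_of_le_of_lt (degreeOf_pderiv_self i p) (by omega))

/-- In `k[X₁,...,X₅]` (char 0), the polynomial
`(X₁-X₂)(X₁-X₃)(X₂-X₃)^{d-2}(X₄-X₅)^{d-1}` is annihilated by the differentiation action
of every generator of `I = (x₁^d,...,x₅^d, x₁^{d-1}x₂, x₁^{d-1}x₃, x₁^{d-1}x₄)` and by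
`∂/∂X₁+⋯+∂/∂X₅`. -/
theorem stmt_12 {k : Type*} [Field k] [CharZero k] (d : ℕ) (hd : 4 ≤ d) :
    (∀ i : Fin 5, (⇑(pderiv i))^[d]
        ((X 0 - X 1) * (X 0 - X 2) * (X 1 - X 2) ^ (d - 2) * (X 3 - X 4) ^ (d - 1) :
          MvPolynomial (Fin 5) k) = 0) ∧
    (∀ j : Fin 5, j = 1 ∨ j = 2 ∨ j = 3 →
      (⇑(pderiv (0 : Fin 5)))^[d - 1] (pderiv j
        ((X 0 - X 1) * (X 0 - X 2) * (X 1 - X 2) ^ (d - 2) * (X 3 - X 4) ^ (d - 1) :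
          MvPolynomial (Fin 5) k)) = 0) ∧
    ∑ i : Fin 5, pderiv i
        ((X 0 - X 1) * (X 0 - X 2) * (X 1 - X 2) ^ (d - 2) * (X 3 - X 4) ^ (d - 1) :
          MvPolynomial (Fin 5) k) = 0 := by
  have hsub1 : ∀ (i a b : Fin 5), degreeOf i (X a - X b : MvPolynomial (Fin 5) k) ≤ 1 := by
    intro i a b
    have h : (X a - X b : MvPolynomial (Fin 5) k) = X a + C (-1 : k) * X b := by
      simp [sub_eq_add_neg]
    rw [h]
    refine le_trans (degreeOf_add_le _ _ _) (max_le ?_ ?_)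
    · rw [degreeOf_X]; split_ifs <;> omega
    · refine le_trans (degreeOf_C_mul_le _ _ _) ?_
      rw [degreeOf_X]; split_ifs <;> omega
  have hsub0 : ∀ (i a b : Fin 5), i ≠ a → i ≠ b →
      degreeOf i (X a - X b : MvPolynomial (Fin 5) k) = 0 := by
    intro i a b hia hib
    have h : (X a - X b : MvPolynomial (Fin 5) k) = X a + C (-1 : k) * X b := by
      simp [sub_eq_add_neg]
    rw [h]
    refine Nat.le_zero.mp (le_trans (degreeOf_add_le _ _ _) (max_le ?_ ?_))
    · rw [degreeOf_X, if_neg hia]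
    · refine le_trans (degreeOf_C_mul_le _ _ _) ?_
      rw [degreeOf_X, if_neg hib]
  have hb : ∀ i : Fin 5, degreeOf i
      ((X 0 - X 1) * (X 0 - X 2) * (X 1 - X 2) ^ (d - 2) * (X 3 - X 4) ^ (d - 1) :
        MvPolynomial (Fin 5) k) ≤
      degreeOf i (X 0 - X 1 : MvPolynomial (Fin 5) k)
        + degreeOf i (X 0 - X 2 : MvPolynomial (Fin 5) k)
        + (d - 2) * degreeOf i (X 1 - X 2 : MvPolynomial (Fin 5) k)
        + (d - 1) * degreeOf i (X 3 - X 4 : MvPolynomial (Fin 5) k) := by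
    intro i
    refine le_trans (degreeOf_mul_le _ _ _) (add_le_add ?_ (degreeOf_pow_le _ _ _))
    refine le_trans (degreeOf_mul_le _ _ _) (add_le_add ?_ (degreeOf_pow_le _ _ _))
    exact degreeOf_mul_le _ _ _
  have hdeg0 : degreeOf 0
      ((X 0 - X 1) * (X 0 - X 2) * (X 1 - X 2) ^ (d - 2) * (X 3 - X 4) ^ (d - 1) :
        MvPolynomial (Fin 5) k) ≤ 2 := by
    have h := hb 0
    rw [hsub0 0 1 2 (by decide) (by decide), hsub0 0 3 4 (by decide) (by decide)] at h
    have h1 := hsub1 0 0 1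
    have h2 := hsub1 0 0 2
    omega
  refine ⟨?_, ?_, ?_⟩
  · intro i
    apply pderiv_iterate_zero
    fin_cases i
    · exact lt_of_le_of_lt hdeg0 (by omega)
    · show degreeOf (1 : Fin 5) _ < d
      have h := hb 1
      rw [hsub0 1 0 2 (by decide) (by decide), hsub0 1 3 4 (by decide) (by decide)] at h
      have h1 := hsub1 1 0 1
      have h2 := hsub1 1 1 2
      have h3 := Nat.mul_le_mul_left (d - 2) h2
      rw [mul_one] at h3
      omega
    · show degreeOf (2 : Fin 5) _ < d
      have h := hb 2
      rw [hsub0 2 0 1 (by decide) (by decide), hsub0 2 3 4 (by decide) (by decide)] at h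
      have h1 := hsub1 2 0 2
      have h2 := hsub1 2 1 2
      have h3 := Nat.mul_le_mul_left (d - 2) h2
      rw [mul_one] at h3
      omega
    · show degreeOf (3 : Fin 5) _ < d
      have h := hb 3
      rw [hsub0 3 0 1 (by decide) (by decide), hsub0 3 0 2 (by decide) (by decide),
        hsub0 3 1 2 (by decide) (by decide)] at h
      have h2 := hsub1 3 3 4
      have h3 := Nat.mul_le_mul_left (d - 1) h2
      rw [mul_one] at h3
      omega
    · show degreeOf (4 : Fin 5) _ < d
      have h := hb 4
      rw [hsub0 4 0 1 (by decide) (by decide), hsub0 4 0 2 (by decide) (by decide),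
        hsub0 4 1 2 (by decide) (by decide)] at h
      have h2 := hsub1 4 3 4
      have h3 := Nat.mul_le_mul_left (d - 1) h2
      rw [mul_one] at h3
      omega
  · intro j _
    apply pderiv_iterate_zero
    exact lt_of_le_of_lt (le_trans (degreeOf_pderiv_le' _ _ _) hdeg0) (by omega)
  · simp only [Fin.sum_univ_five, pderiv_mul, pderiv_pow, map_sub, pderiv_X_self,
      pderiv_X_of_ne (by decide : (1 : Fin 5) ≠ 0), pderiv_X_of_ne (by decide : (2 : Fin 5) ≠ 0),
      pderiv_X_of_ne (by decide : (3 : Fin 5) ≠ 0), pderiv_X_of_ne (by decide : (4 : Fin 5) ≠ 0),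
      pderiv_X_of_ne (by decide : (0 : Fin 5) ≠ 1), pderiv_X_of_ne (by decide : (2 : Fin 5) ≠ 1),
      pderiv_X_of_ne (by decide : (3 : Fin 5) ≠ 1), pderiv_X_of_ne (by decide : (4 : Fin 5) ≠ 1),
      pderiv_X_of_ne (by decide : (0 : Fin 5) ≠ 2), pderiv_X_of_ne (by decide : (1 : Fin 5) ≠ 2),
      pderiv_X_of_ne (by decide : (3 : Fin 5) ≠ 2), pderiv_X_of_ne (by decide : (4 : Fin 5) ≠ 2),
      pderiv_X_of_ne (by decide : (0 : Fin 5) ≠ 3), pderiv_X_of_ne (by decide : (1 : Fin 5) ≠ 3),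
      pderiv_X_of_ne (by decide : (2 : Fin 5) ≠ 3), pderiv_X_of_ne (by decide : (4 : Fin 5) ≠ 3),
      pderiv_X_of_ne (by decide : (0 : Fin 5) ≠ 4), pderiv_X_of_ne (by decide : (1 : Fin 5) ≠ 4),
      pderiv_X_of_ne (by decide : (2 : Fin 5) ≠ 4), pderiv_X_of_ne (by decide : (3 : Fin 5) ≠ 4)]
    ring
end

section
/- Let k have characteristic zero, d ≥ 2, S = k[x₁,...,x_n] for n ≥ 2, and I = (x₁^d, ..., x_n^d, x₁^{d-1}x₂, ..., x₁^{d-1}x_{n-1}). Then (x₁+⋯+x_n)·x₁^{d-1}x_n^{d-1} ∈ I and x₁^{d-1}x_n^{d-1} ∉ I; hence the map ×(x₁+⋯+x_n) : (S/I)_{2d-2} → (S/I)_{2d-1} is not injective. -/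
open MvPolynomial

/-- For `I = (x₁^d,...,x_n^d, x₁^{d-1}x₂,...,x₁^{d-1}x_{n-1})` one has
`(x₁+⋯+x_n)·x₁^{d-1}x_n^{d-1} ∈ I` and `x₁^{d-1}x_n^{d-1} ∉ I`. -/
theorem stmt_13 {k : Type*} [Field k] [CharZero k] (n d : ℕ) (hn : 2 ≤ n) (hd : 2 ≤ d) :
    (∑ i : Fin n, X i) *
        (X (⟨0, by omega⟩ : Fin n) ^ (d - 1) * X (⟨n - 1, by omega⟩ : Fin n) ^ (d - 1)) ∈
      Ideal.span ({p | ∃ i : Fin n, p = X i ^ d} ∪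
        {p | ∃ i : Fin n, i ≠ ⟨0, by omega⟩ ∧ i ≠ ⟨n - 1, by omega⟩ ∧
          p = X (⟨0, by omega⟩ : Fin n) ^ (d - 1) * X i} : Set (MvPolynomial (Fin n) k)) ∧
    (X (⟨0, by omega⟩ : Fin n) ^ (d - 1) * X (⟨n - 1, by omega⟩ : Fin n) ^ (d - 1) :
        MvPolynomial (Fin n) k) ∉
      Ideal.span ({p | ∃ i : Fin n, p = X i ^ d} ∪
        {p | ∃ i : Fin n, i ≠ ⟨0, by omega⟩ ∧ i ≠ ⟨n - 1, by omega⟩ ∧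
          p = X (⟨0, by omega⟩ : Fin n) ^ (d - 1) * X i} : Set (MvPolynomial (Fin n) k)) := by
  set a0 : Fin n := ⟨0, by omega⟩ with ha0
  set an : Fin n := ⟨n - 1, by omega⟩ with han
  have h0n : a0 ≠ an := by
    simp only [ha0, han, Fin.mk.injEq, ne_eq]
    omega
  set 𝒮 : Set (MvPolynomial (Fin n) k) :=
    ({p | ∃ i : Fin n, p = X i ^ d} ∪
      {p | ∃ i : Fin n, i ≠ a0 ∧ i ≠ an ∧ p = X a0 ^ (d - 1) * X i}) with hS
  constructor
  · rw [Finset.sum_mul]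
    apply Ideal.sum_mem
    intro i _
    by_cases h0 : i = a0
    · subst h0
      have : (X a0 * (X a0 ^ (d - 1) * X an ^ (d - 1)) : MvPolynomial (Fin n) k)
          = X an ^ (d - 1) * X a0 ^ d := by
        obtain ⟨e, rfl⟩ : ∃ e, d = e + 1 := ⟨d - 1, by omega⟩
        simp only [Nat.add_sub_cancel]; ring
      rw [this]
      exact Ideal.mul_mem_left _ _ (Ideal.subset_span (Or.inl ⟨a0, rfl⟩))
    by_cases h1 : i = an
    · subst h1
      have : (X an * (X a0 ^ (d - 1) * X an ^ (d - 1)) : MvPolynomial (Fin n) k)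
          = X a0 ^ (d - 1) * X an ^ d := by
        obtain ⟨e, rfl⟩ : ∃ e, d = e + 1 := ⟨d - 1, by omega⟩
        simp only [Nat.add_sub_cancel]; ring
      rw [this]
      exact Ideal.mul_mem_left _ _ (Ideal.subset_span (Or.inl ⟨an, rfl⟩))
    · have : (X i * (X a0 ^ (d - 1) * X an ^ (d - 1)) : MvPolynomial (Fin n) k)
          = X an ^ (d - 1) * (X a0 ^ (d - 1) * X i) := by ring
      rw [this]
      exact Ideal.mul_mem_left _ _ (Ideal.subset_span (Or.inr ⟨i, h0, h1, rfl⟩))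
  · intro hmem
    set μ : Fin n →₀ ℕ := Finsupp.single a0 (d - 1) + Finsupp.single an (d - 1) with hμ
    have key : ∀ f : MvPolynomial (Fin n) k,
        coeff μ (f * (X a0 ^ (d - 1) * X an ^ (d - 1))) = 0 := by
      have : ∀ p ∈ Ideal.span 𝒮, ∀ f : MvPolynomial (Fin n) k,
          coeff μ (f * p) = 0 := by
        intro p hp
        refine Submodule.span_induction ?_ ?_ ?_ ?_ hp
        · rintro g (⟨i, rfl⟩ | ⟨i, hi0, hin, rfl⟩) f
          · rw [X_pow_eq_monomial, coeff_mul_monomial', if_neg]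
            intro hle
            have hi := hle i
            simp only [hμ, Finsupp.single_apply, Finsupp.add_apply] at hi
            rcases eq_or_ne a0 i with h | h <;> rcases eq_or_ne an i with h' | h' <;>
              simp [h, h'] at hi <;> omega
          · rw [show (X a0 ^ (d - 1) * X i : MvPolynomial (Fin n) k)
                = monomial (Finsupp.single a0 (d - 1) + Finsupp.single i 1) 1 by
                rw [X_pow_eq_monomial, X, monomial_mul, one_mul],
              coeff_mul_monomial', if_neg]
            intro hle
            have hi := hle i
            simp only [hμ, Finsupp.single_apply, Finsupp.add_apply] at hi
            simp [Ne.symm hi0, Ne.symm hin, (Ne.symm hi0 : a0 ≠ i)] at hi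
        · intro f; simp
        · intro x y _ _ hx hy f
          rw [mul_add, coeff_add, hx, hy, add_zero]
        · intro a x _ hx f
          rw [smul_eq_mul, ← mul_assoc]
          exact hx (f * a)
      exact this _ hmem
    have h1 : coeff μ (1 * (X a0 ^ (d - 1) * X an ^ (d - 1)) : MvPolynomial (Fin n) k) = 1 := by
      rw [one_mul, X_pow_eq_monomial, X_pow_eq_monomial, monomial_mul, one_mul,
        coeff_monomial, if_pos rfl]
    rw [key 1] at h1
    exact zero_ne_one h1
end

section
/- Let k have characteristic zero, d ≥ 5, S = k[x₁,...,x₄], and I = (x₁^d, x₂^d, x₃^d, x₄^d, x₁^3 x₂^{d-3}). Then HF(S/I, 2d-3) - HF(S/I, 2d-2) = 2d-9 > 0. -/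
open MvPolynomial Finset


/-- exponent vectors of the five generators -/
def expSet (d : ℕ) : Set (Fin 4 →₀ ℕ) :=
  {Finsupp.single 0 d, Finsupp.single 1 d, Finsupp.single 2 d, Finsupp.single 3 d,
   Finsupp.single 0 3 + Finsupp.single 1 (d - 3)}

lemma span_eq {k : Type*} [Field k] (d : ℕ) :
    Ideal.span ({X 0 ^ d, X 1 ^ d, X 2 ^ d, X 3 ^ d, X 0 ^ 3 * X 1 ^ (d - 3)} :
        Set (MvPolynomial (Fin 4) k)) =
    Ideal.span ((fun s => monomial s (1 : k)) '' expSet d) := by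
  congr 1
  rw [expSet]
  simp [Set.image_insert_eq, X_pow_eq_monomial, monomial_mul]

/-- survivor predicate -/
def Ok (d : ℕ) (a : Fin 4 → ℕ) : Prop := (∀ i, a i < d) ∧ ¬(3 ≤ a 0 ∧ d - 3 ≤ a 1)

instance (d : ℕ) : DecidablePred (Ok d) := fun a => by unfold Ok; infer_instance

def surv (d m : ℕ) : Finset (Fin 4 → ℕ) := (Finset.Nat.antidiagonalTuple 4 m).filter (Ok d)

lemma div_iff (d : ℕ) (a : Fin 4 → ℕ) :
    (∃ s ∈ expSet d, s ≤ Finsupp.equivFunOnFinite.symm a) ↔ ¬ Ok d a := by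
  have happ : ∀ i, (Finsupp.equivFunOnFinite.symm a) i = a i := fun _ => rfl
  have hnot : ¬ Ok d a ↔ (∃ i, d ≤ a i) ∨ (3 ≤ a 0 ∧ d - 3 ≤ a 1) := by
    unfold Ok; push_neg
    constructor
    · rintro h
      by_cases h2 : ∀ i, a i < d
      · exact Or.inr (h h2)
      · push_neg at h2; exact Or.inl (by simpa using h2)
    · rintro (⟨i, hi⟩ | h2)
      · intro h; exact absurd (h i) (by omega)
      · intro _; exact h2
  rw [hnot]
  constructor
  · rintro ⟨s, hs, hle⟩
    rw [Finsupp.le_def] at hle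
    simp only [expSet, Set.mem_insert_iff, Set.mem_singleton_iff] at hs
    rcases hs with rfl | rfl | rfl | rfl | rfl
    · exact Or.inl ⟨0, by simpa [happ] using hle 0⟩
    · exact Or.inl ⟨1, by simpa [happ] using hle 1⟩
    · exact Or.inl ⟨2, by simpa [happ] using hle 2⟩
    · exact Or.inl ⟨3, by simpa [happ] using hle 3⟩
    · refine Or.inr ⟨?_, ?_⟩
      · have := hle 0; simpa [happ, Finsupp.single_apply] using this
      · have := hle 1; simpa [happ, Finsupp.single_apply] using this
  · rintro (⟨i, hi⟩ | ⟨h0, h1⟩)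
    · refine ⟨Finsupp.single i d, ?_, ?_⟩
      · fin_cases i <;> simp [expSet]
      · rw [Finsupp.single_le_iff]; simpa [happ] using hi
    · refine ⟨Finsupp.single 0 3 + Finsupp.single 1 (d - 3), by simp [expSet], ?_⟩
      rw [Finsupp.le_def]
      intro i
      fin_cases i <;> simp [happ, Finsupp.single_apply] <;> omega

lemma degree_eq_sum (v : Fin 4 →₀ ℕ) : v.degree = ∑ i, v i :=
  Finset.sum_subset (Finset.subset_univ _)
    (fun i _ hi => by simpa using Finsupp.notMem_support_iff.mp hi)

noncomputable def hilbFn {k : Type*} [Field k] {n : ℕ}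
    (I : Ideal (MvPolynomial (Fin n) k)) (i : ℕ) : ℕ :=
  Module.finrank k ((MvPolynomial.homogeneousSubmodule (Fin n) k i).map
    (Ideal.Quotient.mkₐ k I).toLinearMap)

lemma hilb_eq {k : Type*} [Field k] (d m : ℕ) :
    hilbFn (Ideal.span ((fun s => monomial s (1 : k)) '' expSet d)) m = (surv d m).card := by
  classical
  set I : Ideal (MvPolynomial (Fin 4) k) :=
    Ideal.span ((fun s => monomial s (1 : k)) '' expSet d) with hI
  set f := (Ideal.Quotient.mkₐ k I).toLinearMap with hf
  have hfapp : ∀ p, f p = Ideal.Quotient.mk I p := fun p => rfl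
  set g : (Fin 4 → ℕ) → MvPolynomial (Fin 4) k ⧸ I :=
    fun a => f (monomial (Finsupp.equivFunOnFinite.symm a) 1) with hg
  -- the degree of the exponent finsupp
  have hdeg : ∀ a ∈ surv d m, (Finsupp.equivFunOnFinite.symm a).degree = m := by
    intro a ha
    rw [degree_eq_sum]
    have := (Finset.Nat.mem_antidiagonalTuple.mp (Finset.mem_filter.mp ha).1)
    simpa using this
  -- linear independence
  have hli : LinearIndependent k (fun a : (surv d m) => g a.1) := by
    rw [Fintype.linearIndependent_iff]
    intro c hc a₀
    by_contra hne
    set q : MvPolynomial (Fin 4) k :=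
      ∑ a : (surv d m), c a • monomial (Finsupp.equivFunOnFinite.symm a.1) 1 with hq
    have hqI : q ∈ I := by
      rw [← Ideal.Quotient.eq_zero_iff_mem]
      have : Ideal.Quotient.mk I q = ∑ a : (surv d m), c a • g a.1 := by
        rw [← hfapp, hq, map_sum]
        simp only [map_smul]; rfl
      rw [this, hc]
    have hcoeff : coeff (Finsupp.equivFunOnFinite.symm a₀.1) q = c a₀ := by
      rw [hq, MvPolynomial.coeff_sum]
      rw [Finset.sum_eq_single a₀]
      · simp [MvPolynomial.coeff_smul, coeff_monomial]
      · intro b _ hb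
        have hne2 : Finsupp.equivFunOnFinite.symm b.1 ≠ Finsupp.equivFunOnFinite.symm a₀.1 :=
          fun h => hb (Subtype.ext (Finsupp.equivFunOnFinite.symm.injective h))
        simp [MvPolynomial.coeff_smul, coeff_monomial, hne2]
      · intro h; exact absurd (Finset.mem_univ a₀) h
    have hsupp : (Finsupp.equivFunOnFinite.symm a₀.1) ∈ q.support := by
      rw [mem_support_iff, hcoeff]; exact hne
    have := mem_ideal_span_monomial_image.mp hqI _ hsupp
    have hok : Ok d a₀.1 := (Finset.mem_filter.mp a₀.2).2
    exact (div_iff d a₀.1).mp this hok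
  -- span equality
  have hspan : Submodule.map f (homogeneousSubmodule (Fin 4) k m)
      = Submodule.span k (Set.range (fun a : (surv d m) => g a.1)) := by
    apply le_antisymm
    · rintro _ ⟨p, hp, rfl⟩
      rw [show f p = ∑ v ∈ p.support, f (monomial v (coeff v p)) by
        rw [← map_sum]; congr 1; exact (as_sum p)]
      apply Submodule.sum_mem
      intro v hv
      have hvdeg : v.degree = m := by
        rw [Finsupp.degree_eq_weight_one]
        exact hp (mem_support_iff.mp hv)
      rw [show (monomial v (coeff v p) : MvPolynomial (Fin 4) k)
            = coeff v p • monomial v 1 by rw [smul_monomial, smul_eq_mul, mul_one], map_smul]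
      apply Submodule.smul_mem
      set a : Fin 4 → ℕ := Finsupp.equivFunOnFinite v with ha
      have hva : Finsupp.equivFunOnFinite.symm a = v := Equiv.symm_apply_apply _ _
      by_cases hok : Ok d a
      · have hmem : a ∈ surv d m := by
          rw [surv, Finset.mem_filter]
          refine ⟨Finset.Nat.mem_antidiagonalTuple.mpr ?_, hok⟩
          rw [← hvdeg, degree_eq_sum]; rfl
        refine Submodule.subset_span ⟨⟨a, hmem⟩, ?_⟩
        show f (monomial (Finsupp.equivFunOnFinite.symm a) 1) = f (monomial v 1)
        rw [hva]
      · have : monomial v (1 : k) ∈ I := by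
          rw [hI]
          apply mem_ideal_span_monomial_image.mpr
          intro xi hxi
          rw [support_monomial, if_neg one_ne_zero] at hxi
          rw [Finset.mem_singleton] at hxi
          subst hxi
          have := (div_iff d a).mpr hok
          rwa [hva] at this
        rw [hfapp, Ideal.Quotient.eq_zero_iff_mem.mpr this]
        exact Submodule.zero_mem _
    · rw [Submodule.span_le]
      rintro _ ⟨a, rfl⟩
      refine ⟨monomial (Finsupp.equivFunOnFinite.symm a.1) 1, ?_, rfl⟩
      exact isHomogeneous_monomial _ (hdeg a.1 a.2)
  rw [hilbFn, hspan, finrank_span_eq_card hli, Fintype.card_coe]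

lemma count_range_filter (a b n : ℕ) :
    ((Finset.range n).filter fun x => a ≤ x ∧ x ≤ b).card = min (b + 1) n - a := by
  induction n with
  | zero => simp
  | succ n ih =>
    rw [Finset.range_add_one, Finset.filter_insert]
    split_ifs with h
    · rw [Finset.card_insert_of_notMem (by simp), ih]; omega
    · rw [ih]; omega

lemma mem_surv {d m : ℕ} {a : Fin 4 → ℕ} :
    a ∈ surv d m ↔ a 0 + a 1 + a 2 + a 3 = m ∧ (∀ i, a i < d) ∧ ¬(3 ≤ a 0 ∧ d - 3 ≤ a 1) := by
  simp [surv, Finset.Nat.mem_antidiagonalTuple, Fin.sum_univ_four, Ok, and_assoc]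

/-- triples version -/
def trip (d m : ℕ) : Finset ((ℕ × ℕ) × ℕ) :=
  ((Finset.range d ×ˢ Finset.range d) ×ˢ Finset.range d).filter fun x =>
    ¬(3 ≤ x.1.1 ∧ d - 3 ≤ x.1.2) ∧ x.1.1 + x.1.2 + x.2 ≤ m ∧ m ≤ x.1.1 + x.1.2 + x.2 + (d - 1)

lemma surv_card_eq (d m : ℕ) (hd : 5 ≤ d) : (surv d m).card = (trip d m).card := by
  apply Finset.card_bij' (fun a _ => ((a 0, a 1), a 2))
    (fun x _ => ![x.1.1, x.1.2, x.2, m - (x.1.1 + x.1.2 + x.2)])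
  · intro a ha
    obtain ⟨hsum, hlt, hforb⟩ := mem_surv.mp ha
    have h0 := hlt 0; have h1 := hlt 1; have h2 := hlt 2; have h3 := hlt 3
    simp only [trip, Finset.mem_filter, Finset.mem_product, Finset.mem_range]
    refine ⟨⟨⟨h0, h1⟩, h2⟩, hforb, by omega, by omega⟩
  · intro x hx
    simp only [trip, Finset.mem_filter, Finset.mem_product, Finset.mem_range] at hx
    obtain ⟨⟨⟨h1, h2⟩, h3⟩, hforb, hle, hge⟩ := hx
    rw [mem_surv]
    refine ⟨by simp; omega, ?_, by simpa using hforb⟩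
    intro i; fin_cases i <;> simp <;> omega
  · intro a ha
    obtain ⟨hsum, hlt, hforb⟩ := mem_surv.mp ha
    funext i; fin_cases i <;> simp <;> omega
  · intro x hx
    simp

/-- inner count over the third coordinate -/
def innerCnt (d m : ℕ) (p : ℕ × ℕ) : ℕ :=
  ((Finset.range d).filter fun c =>
    ¬(3 ≤ p.1 ∧ d - 3 ≤ p.2) ∧ p.1 + p.2 + c ≤ m ∧ m ≤ p.1 + p.2 + c + (d - 1)).card

lemma trip_card (d m : ℕ) :
    (trip d m).card = ∑ p ∈ Finset.range d ×ˢ Finset.range d, innerCnt d m p := by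
  simp only [trip, innerCnt, Finset.card_filter, Finset.sum_product]

lemma innerCnt_forb {d m : ℕ} {p : ℕ × ℕ} (h : 3 ≤ p.1 ∧ d - 3 ≤ p.2) : innerCnt d m p = 0 := by
  rw [innerCnt, Finset.filter_false_of_mem (fun c _ => by tauto), Finset.card_empty]

lemma innerCnt_val {d m : ℕ} {p : ℕ × ℕ} (hp : ¬(3 ≤ p.1 ∧ d - 3 ≤ p.2))
    (hs : p.1 + p.2 ≤ m) :
    innerCnt d m p = min (m - (p.1 + p.2) + 1) d - (m - (p.1 + p.2) - (d - 1)) := by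
  rw [innerCnt, Finset.filter_congr
    (q := fun c => m - (p.1 + p.2) - (d - 1) ≤ c ∧ c ≤ m - (p.1 + p.2)) (fun c _ => ?_),
    count_range_filter]
  constructor
  · rintro ⟨-, h1, h2⟩; omega
  · intro h; exact ⟨hp, by omega, by omega⟩

lemma trip_diff (d : ℕ) (hd : 5 ≤ d) :
    (trip d (2 * d - 3)).card = (trip d (2 * d - 2)).card + (2 * d - 9) := by
  classical
  set P := Finset.range d ×ˢ Finset.range d with hP
  set A := P.filter (fun p => p.1 + p.2 ≤ d - 2) with hA
  set B' := P.filter (fun p => ¬(p.1 + p.2 ≤ d - 2)) with hB'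
  set B := B'.filter (fun p => ¬(3 ≤ p.1 ∧ d - 3 ≤ p.2)) with hB
  have hmemP : ∀ p ∈ P, p.1 < d ∧ p.2 < d := fun p hp => by
    simpa [hP, Finset.mem_product] using hp
  -- splits
  have hS3 : ∑ p ∈ P, innerCnt d (2 * d - 3) p
      = ∑ p ∈ A, innerCnt d (2 * d - 3) p + ∑ p ∈ B', innerCnt d (2 * d - 3) p :=
    (Finset.sum_filter_add_sum_filter_not P _ _).symm
  have hS2 : ∑ p ∈ P, innerCnt d (2 * d - 2) p
      = ∑ p ∈ A, innerCnt d (2 * d - 2) p + ∑ p ∈ B', innerCnt d (2 * d - 2) p :=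
    (Finset.sum_filter_add_sum_filter_not P _ _).symm
  have hBsplit : ∀ m', ∑ p ∈ B', innerCnt d m' p = ∑ p ∈ B, innerCnt d m' p := by
    intro m'
    have h0 : ∑ p ∈ B, innerCnt d m' p
        + ∑ p ∈ B'.filter (fun p => ¬¬(3 ≤ p.1 ∧ d - 3 ≤ p.2)), innerCnt d m' p
        = ∑ p ∈ B', innerCnt d m' p :=
      Finset.sum_filter_add_sum_filter_not B' _ _
    have h1 : ∑ p ∈ B'.filter (fun p => ¬¬(3 ≤ p.1 ∧ d - 3 ≤ p.2)), innerCnt d m' p = 0 :=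
      Finset.sum_eq_zero fun p hp =>
        innerCnt_forb (not_not.mp (Finset.mem_filter.mp hp).2)
    omega
  have hB3 := hBsplit (2 * d - 3)
  have hB2 := hBsplit (2 * d - 2)
  -- pointwise comparisons
  have hptA : ∀ p ∈ A, innerCnt d (2 * d - 3) p = innerCnt d (2 * d - 2) p + 1 := by
    intro p hp
    rw [hA, Finset.mem_filter] at hp
    obtain ⟨hpP, hsle⟩ := hp
    obtain ⟨hp1, hp2⟩ := hmemP p hpP
    have hforb : ¬(3 ≤ p.1 ∧ d - 3 ≤ p.2) := by omega
    rw [innerCnt_val hforb (by omega), innerCnt_val hforb (by omega)]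
    omega
  have hptB : ∀ p ∈ B, innerCnt d (2 * d - 2) p = innerCnt d (2 * d - 3) p + 1 := by
    intro p hp
    rw [hB, Finset.mem_filter, hB', Finset.mem_filter] at hp
    obtain ⟨⟨hpP, hsgt⟩, hforb⟩ := hp
    obtain ⟨hp1, hp2⟩ := hmemP p hpP
    have hs24 : p.1 + p.2 ≤ 2 * d - 4 := by omega
    rw [innerCnt_val hforb (by omega), innerCnt_val hforb (by omega)]
    omega
  have hsumA : ∑ p ∈ A, innerCnt d (2 * d - 3) p
      = ∑ p ∈ A, innerCnt d (2 * d - 2) p + A.card := by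
    rw [Finset.sum_congr rfl hptA, Finset.sum_add_distrib, Finset.sum_const, smul_eq_mul,
      mul_one]
  have hsumB : ∑ p ∈ B, innerCnt d (2 * d - 2) p
      = ∑ p ∈ B, innerCnt d (2 * d - 3) p + B.card := by
    rw [Finset.sum_congr rfl hptB, Finset.sum_add_distrib, Finset.sum_const, smul_eq_mul,
      mul_one]
  -- cardinalities
  have hcardP : P.card = d * d := by simp [hP]
  have hcardA : A.card * 2 = d * d - d := by
    have h1 : A.card = ∑ x ∈ Finset.range d, (d - 1 - x) := by
      rw [hA, hP]
      simp only [Finset.card_filter, Finset.sum_product]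
      refine Finset.sum_congr rfl fun x hx => ?_
      rw [← Finset.card_filter]
      by_cases hx2 : x ≤ d - 2
      · rw [Finset.filter_congr (fun y _ => show x + y ≤ d - 2 ↔ 0 ≤ y ∧ y ≤ d - 2 - x by omega),
          count_range_filter]
        omega
      · rw [Finset.filter_false_of_mem (fun y hy => by omega), Finset.card_empty]
        omega
    have h2 := Finset.sum_range_reflect (fun j => j) d
    have h3 : d * (d - 1) = d * d - d := by
      cases d with
      | zero => rfl
      | succ n => rw [Nat.succ_sub_one, Nat.mul_succ, Nat.add_sub_cancel]
    rw [h1, h2, Finset.sum_range_id_mul_two, h3]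
  have hcardF : (P.filter fun p => 3 ≤ p.1 ∧ d - 3 ≤ p.2).card = (d - 3) * 3 := by
    rw [hP, Finset.filter_product, Finset.card_product]
    have e1 : ((Finset.range d).filter fun x => 3 ≤ x).card = d - 3 := by
      rw [Finset.filter_congr (fun x hx => show 3 ≤ x ↔ 3 ≤ x ∧ x ≤ d by
        simp only [Finset.mem_range] at hx; omega), count_range_filter]
      omega
    have e2 : ((Finset.range d).filter fun x => d - 3 ≤ x).card = 3 := by
      rw [Finset.filter_congr (fun x hx => show d - 3 ≤ x ↔ d - 3 ≤ x ∧ x ≤ d by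
        simp only [Finset.mem_range] at hx; omega), count_range_filter]
      omega
    rw [e1, e2]
  have hAB' : A.card + B'.card = P.card :=
    Finset.card_filter_add_card_filter_not _
  have hBF : B.card + (d - 3) * 3 = B'.card := by
    have h0 : B.card + (B'.filter (fun p => ¬¬(3 ≤ p.1 ∧ d - 3 ≤ p.2))).card = B'.card :=
      Finset.card_filter_add_card_filter_not _
    have h1 : B'.filter (fun p => ¬¬(3 ≤ p.1 ∧ d - 3 ≤ p.2))
        = P.filter (fun p => 3 ≤ p.1 ∧ d - 3 ≤ p.2) := by
      rw [hB', Finset.filter_filter]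
      refine Finset.filter_congr fun p hp => ?_
      have := hmemP p hp
      constructor
      · rintro ⟨-, h⟩; exact not_not.mp h
      · intro h; exact ⟨by omega, not_not.mpr h⟩
    rw [h1, hcardF] at h0
    omega
  rw [trip_card, trip_card, hS3, hS2, hBsplit, hBsplit, hsumA, hsumB]
  omega


/-- For `I = (x₁^d,...,x₄^d, x₁³x₂^{d-3})`, `d ≥ 5`:
`HF(S/I, 2d-3) - HF(S/I, 2d-2) = 2d-9 > 0`. -/
theorem stmt_15 {k : Type*} [Field k] [CharZero k] (d : ℕ) (hd : 5 ≤ d) :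
    hilbFn (Ideal.span ({X 0 ^ d, X 1 ^ d, X 2 ^ d, X 3 ^ d, X 0 ^ 3 * X 1 ^ (d - 3)} :
        Set (MvPolynomial (Fin 4) k))) (2 * d - 3) =
      hilbFn (Ideal.span ({X 0 ^ d, X 1 ^ d, X 2 ^ d, X 3 ^ d, X 0 ^ 3 * X 1 ^ (d - 3)} :
        Set (MvPolynomial (Fin 4) k))) (2 * d - 2) + (2 * d - 9) ∧
    0 < 2 * d - 9 := by
  constructor
  · rw [span_eq, hilb_eq, hilb_eq, surv_card_eq d _ hd, surv_card_eq d _ hd, trip_diff d hd]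
  · omega
end

section
/- Let k have characteristic zero, d ≥ 5 with d ≠ 6, and I = (x₁^d, x₂^d, x₃^d, x₁^{⌊d/2⌋} x₂^{⌈d/2⌉}) ⊂ k[x₁,x₂,x₃]. Set t = ⌊(3d-3)/2⌋. Then HF(S/I, t-1) > HF(S/I, t). -/
open MvPolynomial

namespace Stmt16Aux

/-- The standard monomials of degree `i` as triples of exponents. -/
def Tset (d i : ℕ) : Finset (ℕ × ℕ × ℕ) :=
  (Finset.range d ×ˢ Finset.range d ×ˢ Finset.range d).filter
    (fun p => p.1 + p.2.1 + p.2.2 = i ∧ ¬(d / 2 ≤ p.1 ∧ (d + 1) / 2 ≤ p.2.1))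

lemma mem_Tset' {d i : ℕ} {p : ℕ × ℕ × ℕ} :
    p ∈ Tset d i ↔ p.1 < d ∧ p.2.1 < d ∧ p.2.2 < d ∧ p.1 + p.2.1 + p.2.2 = i ∧
      ¬(d / 2 ≤ p.1 ∧ (d + 1) / 2 ≤ p.2.1) := by
  simp [Tset, Finset.mem_filter, Finset.mem_product, and_assoc]

lemma mem_Tset {d i x y z : ℕ} :
    (x, y, z) ∈ Tset d i ↔ x < d ∧ y < d ∧ z < d ∧ x + y + z = i ∧
      ¬(d / 2 ≤ x ∧ (d + 1) / 2 ≤ y) := mem_Tset'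

/-- Exponent triple to `Fin 3 →₀ ℕ`. -/
noncomputable def mon (p : ℕ × ℕ × ℕ) : Fin 3 →₀ ℕ :=
  Finsupp.single 0 p.1 + Finsupp.single 1 p.2.1 + Finsupp.single 2 p.2.2

lemma mon_apply0 (p : ℕ × ℕ × ℕ) : mon p 0 = p.1 := by
  simp [mon, Finsupp.single_apply]

lemma mon_apply1 (p : ℕ × ℕ × ℕ) : mon p 1 = p.2.1 := by
  simp [mon, Finsupp.single_apply]

lemma mon_apply2 (p : ℕ × ℕ × ℕ) : mon p 2 = p.2.2 := by
  simp [mon, Finsupp.single_apply]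

lemma mon_injective : Function.Injective mon := by
  intro p q h
  have h0 := congrArg (fun f : Fin 3 →₀ ℕ => f 0) h
  have h1 := congrArg (fun f : Fin 3 →₀ ℕ => f 1) h
  have h2 := congrArg (fun f : Fin 3 →₀ ℕ => f 2) h
  simp only [mon_apply0, mon_apply1, mon_apply2] at h0 h1 h2
  exact Prod.ext h0 (Prod.ext h1 h2)

lemma mon_of_finsupp (s : Fin 3 →₀ ℕ) : mon (s 0, s 1, s 2) = s := by
  ext j
  fin_cases j <;> simp [mon, Finsupp.single_apply]

lemma degree_fin3 (s : Fin 3 →₀ ℕ) : s.degree = s 0 + s 1 + s 2 := by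
  rw [Finsupp.degree]
  show ∑ i ∈ s.support, s i = _
  rw [Finset.sum_subset (Finset.subset_univ _)
    (fun x _ hx => Finsupp.notMem_support_iff.mp hx)]
  exact Fin.sum_univ_three s

lemma pair_le (aa bb : ℕ) (s : Fin 3 →₀ ℕ) :
    Finsupp.single (0 : Fin 3) aa + Finsupp.single 1 bb ≤ s ↔ aa ≤ s 0 ∧ bb ≤ s 1 := by
  rw [Finsupp.le_def]
  constructor
  · intro h
    refine ⟨?_, ?_⟩
    · simpa [Finsupp.single_apply] using h 0
    · simpa [Finsupp.single_apply] using h 1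
  · rintro ⟨h0, h1⟩ j
    fin_cases j <;> simp [Finsupp.single_apply, h0, h1]

variable {k : Type*} [Field k]

/-- Membership in the ideal. -/
lemma mem_I_iff (d : ℕ) (x : MvPolynomial (Fin 3) k) :
    x ∈ Ideal.span ({X 0 ^ d, X 1 ^ d, X 2 ^ d, X 0 ^ (d / 2) * X 1 ^ ((d + 1) / 2)} :
        Set (MvPolynomial (Fin 3) k)) ↔
      ∀ s ∈ x.support, d ≤ s 0 ∨ d ≤ s 1 ∨ d ≤ s 2 ∨
        (d / 2 ≤ s 0 ∧ (d + 1) / 2 ≤ s 1) := by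
  have h1 : ({X 0 ^ d, X 1 ^ d, X 2 ^ d, X 0 ^ (d / 2) * X 1 ^ ((d + 1) / 2)} :
      Set (MvPolynomial (Fin 3) k)) =
      (fun s => monomial s (1 : k)) '' ({Finsupp.single 0 d, Finsupp.single 1 d,
        Finsupp.single 2 d, Finsupp.single 0 (d / 2) + Finsupp.single 1 ((d + 1) / 2)} :
        Set (Fin 3 →₀ ℕ)) := by
    rw [Set.image_insert_eq, Set.image_insert_eq, Set.image_insert_eq, Set.image_singleton]
    rw [X_pow_eq_monomial, X_pow_eq_monomial, X_pow_eq_monomial, X_pow_eq_monomial,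
      X_pow_eq_monomial, monomial_mul, one_mul]
  rw [h1, mem_ideal_span_monomial_image]
  refine forall₂_congr fun s _ => ?_
  simp only [Set.mem_insert_iff, Set.mem_singleton_iff, exists_eq_or_imp, exists_eq_left,
    Finsupp.single_le_iff, pair_le]

/-- The Hilbert function equals the number of standard monomials. -/
lemma hilb_eq_card (d i : ℕ) :
    hilbFn (Ideal.span ({X 0 ^ d, X 1 ^ d, X 2 ^ d, X 0 ^ (d / 2) * X 1 ^ ((d + 1) / 2)} :
        Set (MvPolynomial (Fin 3) k))) i = (Tset d i).card := by
  classical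
  set I : Ideal (MvPolynomial (Fin 3) k) :=
    Ideal.span ({X 0 ^ d, X 1 ^ d, X 2 ^ d, X 0 ^ (d / 2) * X 1 ^ ((d + 1) / 2)} :
        Set (MvPolynomial (Fin 3) k)) with hI
  set f := (Ideal.Quotient.mkₐ k I).toLinearMap with hf
  set v : {p : ℕ × ℕ × ℕ // p ∈ Tset d i} → (MvPolynomial (Fin 3) k ⧸ I) :=
    fun p => f (monomial (mon p.1) 1) with hv
  have hli : LinearIndependent k v := by
    rw [linearIndependent_iff']
    intro s g hsum j hj
    by_contra hg
    set q : MvPolynomial (Fin 3) k := ∑ j' ∈ s, g j' • monomial (mon j'.1) 1 with hq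
    have hq0 : f q = 0 := by
      rw [hq, map_sum]
      simpa only [map_smul] using hsum
    have hqI : q ∈ I := by
      rwa [hf, AlgHom.toLinearMap_apply, Ideal.Quotient.mkₐ_eq_mk,
        Ideal.Quotient.eq_zero_iff_mem] at hq0
    have hcoeff : coeff (mon j.1) q = g j := by
      rw [hq, coeff_sum]
      rw [Finset.sum_eq_single j]
      · simp [coeff_monomial]
      · intro j' _ hne
        have : mon j'.1 ≠ mon j.1 := fun h =>
          hne (Subtype.ext (mon_injective h))
        simp [coeff_monomial, this]
      · intro h; exact absurd hj h
    have hmem : mon j.1 ∈ q.support := by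
      rw [mem_support_iff, hcoeff]; exact hg
    have hdvd := (mem_I_iff d q).mp hqI _ hmem
    have hjT := j.2
    rw [mem_Tset'] at hjT
    rw [mon_apply0, mon_apply1, mon_apply2] at hdvd
    omega
  have hspan : (MvPolynomial.homogeneousSubmodule (Fin 3) k i).map f
      = Submodule.span k (Set.range v) := by
    apply le_antisymm
    · rw [Submodule.map_le_iff_le_comap]
      intro p hp
      rw [mem_homogeneousSubmodule] at hp
      rw [Submodule.mem_comap]
      have hrep : p = ∑ s ∈ p.support, monomial s (coeff s p) :=
        (support_sum_monomial_coeff p).symm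
      rw [hrep, map_sum]
      apply Submodule.sum_mem
      intro s hs
      have hmono : monomial s (coeff s p) = (coeff s p) • monomial s (1 : k) := by
        rw [smul_monomial, smul_eq_mul, mul_one]
      rw [hmono, map_smul]
      apply Submodule.smul_mem
      by_cases hdiv : d ≤ s 0 ∨ d ≤ s 1 ∨ d ≤ s 2 ∨ (d / 2 ≤ s 0 ∧ (d + 1) / 2 ≤ s 1)
      · have hmem : monomial s (1 : k) ∈ I := by
          rw [hI, mem_I_iff]
          intro s' hs'
          rw [support_monomial, if_neg (one_ne_zero)] at hs'
          rw [Finset.mem_singleton] at hs'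
          subst hs'
          exact hdiv
        have : f (monomial s (1 : k)) = 0 := by
          rw [hf, AlgHom.toLinearMap_apply, Ideal.Quotient.mkₐ_eq_mk,
            Ideal.Quotient.eq_zero_iff_mem]
          exact hmem
        rw [this]
        exact Submodule.zero_mem _
      · have hdeg : s.degree = i := by
          rw [Finsupp.degree_eq_weight_one]
          exact hp (mem_support_iff.mp hs)
        rw [degree_fin3] at hdeg
        have hT : (s 0, s 1, s 2) ∈ Tset d i := by
          rw [mem_Tset]
          push_neg at hdiv
          omega
        have : f (monomial s (1 : k)) = v ⟨(s 0, s 1, s 2), hT⟩ := by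
          rw [hv]
          simp only [mon_of_finsupp]
        rw [this]
        exact Submodule.subset_span (Set.mem_range_self _)
    · rw [Submodule.span_le]
      rintro x ⟨p, rfl⟩
      refine Submodule.mem_map.mpr ⟨monomial (mon p.1) 1, ?_, rfl⟩
      rw [mem_homogeneousSubmodule]
      apply isHomogeneous_monomial
      rw [degree_fin3, mon_apply0, mon_apply1, mon_apply2]
      exact (mem_Tset'.mp p.2).2.2.2.1
  rw [hilbFn, hspan, finrank_span_eq_card hli, Fintype.card_coe]

/-- The injection used for the combinatorial inequality. -/
def phi (d : ℕ) (p : ℕ × ℕ × ℕ) : ℕ × ℕ × ℕ :=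
  if p.2.2 = 0 then
    (if p.1 < d / 2 then ((0 : ℕ), (3 * d - 3) / 2 - d, d - 1)
      else (1, (3 * d - 3) / 2 - d - 1, d - 1))
  else (p.1, p.2.1, p.2.2 - 1)

lemma phi_apply (d x y z : ℕ) : phi d (x, y, z) =
    if z = 0 then
      (if x < d / 2 then ((0 : ℕ), (3 * d - 3) / 2 - d, d - 1)
        else (1, (3 * d - 3) / 2 - d - 1, d - 1))
    else (x, y, z - 1) := rfl

lemma card_lt (d : ℕ) (hd : 5 ≤ d) (hd6 : d ≠ 6) :
    (Tset d ((3 * d - 3) / 2)).card < (Tset d ((3 * d - 3) / 2 - 1)).card := by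
  have hpar := Nat.mod_two_eq_zero_or_one d
  set w : ℕ × ℕ × ℕ := if d % 2 = 0 then (2, (3 * d - 3) / 2 - d - 2, d - 1)
    else (0, (3 * d - 3) / 2 - d, d - 1) with hw
  have hwmem : w ∈ Tset d ((3 * d - 3) / 2 - 1) := by
    rcases hpar with he | ho
    · rw [hw, if_pos he, mem_Tset]
      omega
    · rw [hw, if_neg (by omega), mem_Tset]
      omega
  have hmaps : ∀ p ∈ Tset d ((3 * d - 3) / 2),
      phi d p ∈ (Tset d ((3 * d - 3) / 2 - 1)).erase w := by
    rintro ⟨x, y, z⟩ hp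
    rw [mem_Tset] at hp
    rw [Finset.mem_erase]
    by_cases hz0 : z = 0
    · by_cases hxa : x < d / 2
      · rw [phi_apply, if_pos hz0, if_pos hxa]
        constructor
        · rcases hpar with he | ho
          · rw [hw, if_pos he]; simp only [ne_eq, Prod.mk.injEq, not_and]; omega
          · rw [hw, if_neg (by omega)]; simp only [ne_eq, Prod.mk.injEq, not_and]; omega
        · rw [mem_Tset]; omega
      · rw [phi_apply, if_pos hz0, if_neg hxa]
        constructor
        · rcases hpar with he | ho
          · rw [hw, if_pos he]; simp only [ne_eq, Prod.mk.injEq, not_and]; omega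
          · rw [hw, if_neg (by omega)]; simp only [ne_eq, Prod.mk.injEq, not_and]; omega
        · rw [mem_Tset]; omega
    · rw [phi_apply, if_neg hz0]
      constructor
      · rcases hpar with he | ho
        · rw [hw, if_pos he]; simp only [ne_eq, Prod.mk.injEq, not_and]; omega
        · rw [hw, if_neg (by omega)]; simp only [ne_eq, Prod.mk.injEq, not_and]; omega
      · rw [mem_Tset]; omega
  have hinj : Set.InjOn (phi d) (Tset d ((3 * d - 3) / 2)) := by
    rintro ⟨x, y, z⟩ hp ⟨x', y', z'⟩ hq hpq
    rw [Finset.mem_coe, mem_Tset] at hp hq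
    rw [phi_apply, phi_apply] at hpq
    by_cases hz0 : z = 0 <;> by_cases hz0' : z' = 0
    · rw [if_pos hz0, if_pos hz0'] at hpq
      by_cases hxa : x < d / 2 <;> by_cases hxa' : x' < d / 2 <;>
        [rw [if_pos hxa, if_pos hxa'] at hpq; rw [if_pos hxa, if_neg hxa'] at hpq;
         rw [if_neg hxa, if_pos hxa'] at hpq; rw [if_neg hxa, if_neg hxa'] at hpq] <;>
        rw [Prod.mk.injEq, Prod.mk.injEq] at hpq <;>
        rw [Prod.mk.injEq, Prod.mk.injEq] <;> omega
    · rw [if_pos hz0, if_neg hz0'] at hpq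
      by_cases hxa : x < d / 2 <;> [rw [if_pos hxa] at hpq; rw [if_neg hxa] at hpq] <;>
        rw [Prod.mk.injEq, Prod.mk.injEq] at hpq <;> omega
    · rw [if_neg hz0, if_pos hz0'] at hpq
      by_cases hxa : x' < d / 2 <;> [rw [if_pos hxa] at hpq; rw [if_neg hxa] at hpq] <;>
        rw [Prod.mk.injEq, Prod.mk.injEq] at hpq <;> omega
    · rw [if_neg hz0, if_neg hz0'] at hpq
      rw [Prod.mk.injEq, Prod.mk.injEq] at hpq
      rw [Prod.mk.injEq, Prod.mk.injEq]
      omega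
  calc (Tset d ((3 * d - 3) / 2)).card ≤ ((Tset d ((3 * d - 3) / 2 - 1)).erase w).card :=
        Finset.card_le_card_of_injOn _ hmaps hinj
    _ < (Tset d ((3 * d - 3) / 2 - 1)).card := Finset.card_erase_lt_of_mem hwmem

end Stmt16Aux

/-- For `d ≥ 5`, `d ≠ 6`, `I = (x₁^d, x₂^d, x₃^d, x₁^{⌊d/2⌋}x₂^{⌈d/2⌉})` and
`t = ⌊(3d-3)/2⌋` one has `HF(S/I, t-1) > HF(S/I, t)`. -/
theorem stmt_16 {k : Type*} [Field k] [CharZero k] (d : ℕ) (hd : 5 ≤ d) (hd6 : d ≠ 6) :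
    hilbFn (Ideal.span ({X 0 ^ d, X 1 ^ d, X 2 ^ d, X 0 ^ (d / 2) * X 1 ^ ((d + 1) / 2)} :
        Set (MvPolynomial (Fin 3) k))) ((3 * d - 3) / 2 - 1) >
      hilbFn (Ideal.span ({X 0 ^ d, X 1 ^ d, X 2 ^ d, X 0 ^ (d / 2) * X 1 ^ ((d + 1) / 2)} :
        Set (MvPolynomial (Fin 3) k))) ((3 * d - 3) / 2) := by
  rw [Stmt16Aux.hilb_eq_card, Stmt16Aux.hilb_eq_card]
  exact Stmt16Aux.card_lt d hd hd6
end
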